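/- Let 0 < α₀ < π/2. Among all C¹ functions θ: [−α₀, α₀] → ℝ with θ(−α₀) = 0 and θ(α₀) = π, the functional F(θ) = ∫_{−α₀}^{α₀} √(1 + cos²(α)·θ'(α)²) dα is minimized by θ*(α) = arcsin(cot(α₀)·tan(α)) + π/2, and the minimum value is π·cos(α₀) + ∫_{−α₀}^{α₀} √(1 − cos²(α₀)/cos²(α)) dα. -/

import Mathlib

open Real Set MeasureTheory

/-!
Calibration. By Cauchy–Schwarz in the plane, `√(1 + c² t²) ≥ √(1 - c₀²/c²) + c₀ t` whenever
`c₀² ≤ c²`; with `c = cos α`, `c₀ = cos α₀` and `t = θ'(α)`, integrating gives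
`F(θ) ≥ ∫ √(1 - cos² α₀ / cos² α) + cos α₀ (θ(α₀) - θ(-α₀))`, a bound independent of `θ`.
The derivative of `θ*` is exactly the slope at which the pointwise bound is an equality, and
`θ*` runs from `0` to `π`, so `θ*` attains it.
-/

lemma Real.cos_le_cos_of_abs_le {x y : ℝ} (hxy : |x| ≤ y) (hy : y ≤ π) : cos y ≤ cos x := by
  rw [← cos_abs x]
  exact cos_le_cos_of_nonneg_of_le_pi (abs_nonneg x) hy hxy

lemma Real.cos_lt_cos_of_abs_lt {x y : ℝ} (hxy : |x| < y) (hy : y ≤ π) : cos y < cos x := by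
  rw [← cos_abs x]
  exact cos_lt_cos_of_nonneg_of_le_pi (abs_nonneg x) hy hxy

lemma add_mul_le_sqrt_one_add_sq {a b : ℝ} (hab : a ^ 2 + b ^ 2 = 1) (s : ℝ) :
    a + b * s ≤ √(1 + s ^ 2) :=
  (le_abs_self _).trans (abs_le_sqrt (by nlinarith [sq_nonneg (a * s - b)]))

lemma add_mul_div_eq_sqrt_one_add_div_sq {a b : ℝ} (hab : a ^ 2 + b ^ 2 = 1) (ha : 0 < a) :
    a + b * (b / a) = √(1 + (b / a) ^ 2) := by
  rw [show 1 + (b / a) ^ 2 = (1 / a) ^ 2 by field_simp; linarith, sqrt_sq (by positivity)]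
  field_simp
  linarith

lemma sqrt_one_sub_div_sq_sq_add_div_sq {c₀ c : ℝ} (hc : c ≠ 0) (h : c₀ ^ 2 ≤ c ^ 2) :
    √(1 - c₀ ^ 2 / c ^ 2) ^ 2 + (c₀ / c) ^ 2 = 1 := by
  rw [sq_sqrt (sub_nonneg.2 ((div_le_one (by positivity)).2 h)), div_pow]
  ring

lemma sqrt_one_sub_div_sq_add_mul_le {c₀ c : ℝ} (hc : c ≠ 0) (h : c₀ ^ 2 ≤ c ^ 2) (t : ℝ) :
    √(1 - c₀ ^ 2 / c ^ 2) + c₀ * t ≤ √(1 + c ^ 2 * t ^ 2) := by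
  convert add_mul_le_sqrt_one_add_sq (sqrt_one_sub_div_sq_sq_add_div_sq hc h) (c * t) using 2
  · field_simp
  · ring

/-- The slope `t` at which `sqrt_one_sub_div_sq_add_mul_le` is an equality. -/
noncomputable def calibratedSlope (c₀ c : ℝ) : ℝ :=
  c₀ / (c ^ 2 * √(1 - c₀ ^ 2 / c ^ 2))

lemma sqrt_one_sub_div_sq_add_mul_calibratedSlope {c₀ c : ℝ} (h : c₀ ^ 2 < c ^ 2) :
    √(1 - c₀ ^ 2 / c ^ 2) + c₀ * calibratedSlope c₀ c =
      √(1 + c ^ 2 * calibratedSlope c₀ c ^ 2) := by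
  have hc : c ≠ 0 := by rintro rfl; nlinarith
  have ha : 0 < √(1 - c₀ ^ 2 / c ^ 2) :=
    sqrt_pos.2 (sub_pos.2 ((div_lt_one (by positivity)).2 h))
  unfold calibratedSlope
  convert add_mul_div_eq_sqrt_one_add_div_sq (sqrt_one_sub_div_sq_sq_add_div_sq hc h.le) ha
    using 2 <;> field_simp

theorem integral_add_mul_sub_le_of_forall_le {a b c : ℝ} {θ q F : ℝ → ℝ} (hab : a ≤ b)
    (hθ : ContDiff ℝ 1 θ) (hq : IntervalIntegrable q volume a b)
    (hF : IntervalIntegrable F volume a b) (h : ∀ x ∈ Icc a b, q x + c * deriv θ x ≤ F x) :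
    (∫ x in a..b, q x) + c * (θ b - θ a) ≤ ∫ x in a..b, F x := by
  have hθ' : IntervalIntegrable (deriv θ) volume a b :=
    (hθ.continuous_deriv le_rfl).intervalIntegrable a b
  calc (∫ x in a..b, q x) + c * (θ b - θ a) = ∫ x in a..b, q x + c * deriv θ x := by
        rw [intervalIntegral.integral_add hq (hθ'.const_mul c),
          intervalIntegral.integral_const_mul, intervalIntegral.integral_deriv_eq_sub
            (fun x _ => (hθ.differentiable one_ne_zero).differentiableAt) hθ']
    _ ≤ _ := intervalIntegral.integral_mono_on hab (hq.add (hθ'.const_mul c)) hF h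

lemma hasDerivAt_arcsin_const_mul_tan {k x : ℝ} (hx : cos x ≠ 0) (hk : (k * tan x) ^ 2 < 1) :
    HasDerivAt (fun a => arcsin (k * tan a)) (k / (cos x ^ 2 * √(1 - (k * tan x) ^ 2))) x := by
  have hk' := (sq_lt_one_iff_abs_lt_one _).1 hk
  have := (hasDerivAt_arcsin (abs_lt.1 hk').1.ne' (abs_lt.1 hk').2.ne).comp x
    ((hasDerivAt_tan hx).const_mul k)
  refine this.congr_deriv ?_
  field_simp

lemma one_sub_cot_mul_tan_sq {α₀ x : ℝ} (hs : sin α₀ ≠ 0) (hc : cos x ≠ 0) :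
    1 - (cos α₀ / sin α₀ * tan x) ^ 2 = (1 - cos α₀ ^ 2 / cos x ^ 2) / sin α₀ ^ 2 := by
  rw [tan_eq_sin_div_cos]
  field_simp
  linear_combination cos x ^ 2 * sin_sq_add_cos_sq α₀ - cos α₀ ^ 2 * sin_sq_add_cos_sq x

lemma hasDerivAt_arcsin_cot_mul_tan {α₀ x : ℝ} (hs : 0 < sin α₀) (h : cos α₀ ^ 2 < cos x ^ 2) :
    HasDerivAt (fun a => arcsin (cos α₀ / sin α₀ * tan a) + π / 2)
      (calibratedSlope (cos α₀) (cos x)) x := by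
  have hc : cos x ≠ 0 := by intro hc; rw [hc] at h; nlinarith
  have hpos : 0 < 1 - cos α₀ ^ 2 / cos x ^ 2 := sub_pos.2 ((div_lt_one (by positivity)).2 h)
  have hid := one_sub_cot_mul_tan_sq hs.ne' hc
  have hk : (cos α₀ / sin α₀ * tan x) ^ 2 < 1 := by
    have : 0 < 1 - (cos α₀ / sin α₀ * tan x) ^ 2 := hid ▸ by positivity
    linarith
  refine ((hasDerivAt_arcsin_const_mul_tan hc hk).add_const (π / 2)).congr_deriv ?_
  rw [hid, sqrt_div' _ (sq_nonneg _), sqrt_sq hs.le, calibratedSlope]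
  field_simp

lemma cot_mul_tan_self {α₀ : ℝ} (hs : sin α₀ ≠ 0) (hc : cos α₀ ≠ 0) :
    cos α₀ / sin α₀ * tan α₀ = 1 := by
  rw [tan_eq_sin_div_cos]
  field_simp

section Extremal

variable {α₀ : ℝ}

lemma continuousOn_arcsin_cot_mul_tan (h1 : α₀ < π / 2) :
    ContinuousOn (fun a => arcsin (cos α₀ / sin α₀ * tan a) + π / 2) (Icc (-α₀) α₀) := by
  have htan : ContinuousOn tan (Icc (-α₀) α₀) := continuousOn_tan.mono fun a ha =>
    (cos_pos_of_mem_Ioo ⟨by linarith [ha.1, ha.2], by linarith [ha.2]⟩).ne'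
  exact (continuous_arcsin.comp_continuousOn (continuousOn_const.mul htan)).add continuousOn_const

lemma cos_sq_lt_cos_sq_of_mem_Ioo (h1 : α₀ < π / 2) {x : ℝ} (hx : x ∈ Ioo (-α₀) α₀) :
    cos α₀ ^ 2 < cos x ^ 2 :=
  pow_lt_pow_left₀ (cos_lt_cos_of_abs_lt (abs_lt.2 hx) (by linarith [pi_pos]))
    (cos_pos_of_mem_Ioo ⟨by linarith [hx.1, hx.2], h1⟩).le two_ne_zero

lemma hasDerivAt_arcsin_cot_mul_tan_of_mem_Ioo (h0 : 0 < α₀) (h1 : α₀ < π / 2) {x : ℝ}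
    (hx : x ∈ Ioo (-α₀) α₀) :
    HasDerivAt (fun a => arcsin (cos α₀ / sin α₀ * tan a) + π / 2)
      (calibratedSlope (cos α₀) (cos x)) x :=
  hasDerivAt_arcsin_cot_mul_tan (sin_pos_of_pos_of_lt_pi h0 (by linarith))
    (cos_sq_lt_cos_sq_of_mem_Ioo h1 hx)

lemma intervalIntegrable_calibratedSlope_cos (h0 : 0 < α₀) (h1 : α₀ < π / 2) :
    IntervalIntegrable (fun x => calibratedSlope (cos α₀) (cos x)) volume (-α₀) α₀ := by
  have hab : -α₀ ≤ α₀ := by linarith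
  refine intervalIntegral.intervalIntegrable_deriv_of_nonneg
    (g := fun a => arcsin (cos α₀ / sin α₀ * tan a) + π / 2) ?_ ?_ ?_
  · rw [uIcc_of_le hab]
    exact continuousOn_arcsin_cot_mul_tan h1
  · rw [min_eq_left hab, max_eq_right hab]
    exact fun x hx => hasDerivAt_arcsin_cot_mul_tan_of_mem_Ioo h0 h1 hx
  · intro x _
    have hc₀ : 0 < cos α₀ := cos_pos_of_mem_Ioo ⟨by linarith, h1⟩
    unfold calibratedSlope
    positivity

lemma integral_calibratedSlope_cos (h0 : 0 < α₀) (h1 : α₀ < π / 2) :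
    ∫ x in (-α₀)..α₀, calibratedSlope (cos α₀) (cos x) = π := by
  have hcot : cos α₀ / sin α₀ * tan α₀ = 1 :=
    cot_mul_tan_self (sin_pos_of_pos_of_lt_pi h0 (by linarith)).ne'
      (cos_pos_of_mem_Ioo ⟨by linarith, h1⟩).ne'
  rw [intervalIntegral.integral_eq_sub_of_hasDerivAt_of_le (by linarith)
    (continuousOn_arcsin_cot_mul_tan h1)
    (fun x hx => hasDerivAt_arcsin_cot_mul_tan_of_mem_Ioo h0 h1 hx)
    (intervalIntegrable_calibratedSlope_cos h0 h1)]
  simp only [tan_neg, mul_neg, hcot, arcsin_one, arcsin_neg_one]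
  ring

lemma intervalIntegrable_sqrt_one_sub_div_cos_sq (h0 : 0 ≤ α₀) (h1 : α₀ < π / 2) :
    IntervalIntegrable (fun x => √(1 - cos α₀ ^ 2 / cos x ^ 2)) volume (-α₀) α₀ := by
  refine ContinuousOn.intervalIntegrable ?_
  rw [uIcc_of_le (by linarith)]
  exact (continuousOn_const.sub (continuousOn_const.div (continuous_cos.pow 2).continuousOn
    fun x hx => (pow_pos (cos_pos_of_mem_Ioo ⟨by linarith [hx.1], by linarith [hx.2]⟩) 2).ne')).sqrt

end Extremal

theorem stmt14 (α₀ : ℝ) (h0 : 0 < α₀) (h1 : α₀ < π / 2) :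
    (∀ θ : ℝ → ℝ, ContDiff ℝ 1 θ → θ (-α₀) = 0 → θ α₀ = π →
      (∫ α in (-α₀)..α₀, Real.sqrt (1 + Real.cos α ^ 2 * (deriv θ α) ^ 2)) ≥
        π * Real.cos α₀ +
          ∫ α in (-α₀)..α₀, Real.sqrt (1 - Real.cos α₀ ^ 2 / Real.cos α ^ 2)) ∧
    (∫ α in (-α₀)..α₀,
        Real.sqrt (1 + Real.cos α ^ 2 *
          (deriv (fun a =>
            Real.arcsin (Real.cos α₀ / Real.sin α₀ * Real.tan a) + π / 2) α) ^ 2)) =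
      π * Real.cos α₀ +
        ∫ α in (-α₀)..α₀, Real.sqrt (1 - Real.cos α₀ ^ 2 / Real.cos α ^ 2) := by
  have hab : -α₀ ≤ α₀ := by linarith
  have hc₀ : 0 < cos α₀ := cos_pos_of_mem_Ioo ⟨by linarith, h1⟩
  have hcos : ∀ x ∈ Icc (-α₀) α₀, cos α₀ ≤ cos x := fun x hx =>
    cos_le_cos_of_abs_le (abs_le.2 hx) (by linarith)
  have hq := intervalIntegrable_sqrt_one_sub_div_cos_sq h0.le h1
  refine ⟨fun θ hθ hθa hθb => ?_, ?_⟩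
  · have hF : Continuous fun α => √(1 + cos α ^ 2 * deriv θ α ^ 2) := by
      have := hθ.continuous_deriv le_rfl
      fun_prop
    have hbound := integral_add_mul_sub_le_of_forall_le hab hθ hq (hF.intervalIntegrable _ _)
      fun x hx => sqrt_one_sub_div_sq_add_mul_le (hc₀.trans_le (hcos x hx)).ne'
        (pow_le_pow_left₀ hc₀.le (hcos x hx) 2) (deriv θ x)
    rw [hθa, hθb, sub_zero] at hbound
    linarith
  · calc _ = ∫ α in (-α₀)..α₀,
          √(1 - cos α₀ ^ 2 / cos α ^ 2) + cos α₀ * calibratedSlope (cos α₀) (cos α) :=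
          intervalIntegral.integral_congr_Ioo_of_le hab fun x hx => by
            rw [(hasDerivAt_arcsin_cot_mul_tan_of_mem_Ioo h0 h1 hx).deriv]
            exact (sqrt_one_sub_div_sq_add_mul_calibratedSlope
              (cos_sq_lt_cos_sq_of_mem_Ioo h1 hx)).symm
      _ = _ := by
        rw [intervalIntegral.integral_add hq
            ((intervalIntegrable_calibratedSlope_cos h0 h1).const_mul _),
          intervalIntegral.integral_const_mul, integral_calibratedSlope_cos h0 h1]
        ring
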